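/- arXiv:2603.09937 — 3 statements merged into one kernel-verified Lean document; each statement's English description precedes it below -/
import Mathlib

section
/- Let R > 0 and p > R. For any point (x, y) in the closed disk x² + y² ≤ R², the quantity d(x,y) = √((p-x)² + y²) − √((R-x)² + y²) satisfies d(x,y) ≥ (p−R)^{3/2} / √p. -/
theorem stmt_1 (R p : ℝ) (hR : 0 < R) (hp : R < p) :
    ∀ x y : ℝ, x ^ 2 + y ^ 2 ≤ R ^ 2 →
      (p - R) ^ ((3 : ℝ) / 2) / Real.sqrt p ≤
        Real.sqrt ((p - x) ^ 2 + y ^ 2) - Real.sqrt ((R - x) ^ 2 + y ^ 2) := by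
  intro x y h
  have hp0 : 0 < p := hR.trans hp
  have hk0 : (0:ℝ) < p - R := by linarith
  set c : ℝ := (p - R) ^ ((3 : ℝ) / 2) / Real.sqrt p with hc
  have hc0 : 0 ≤ c := div_nonneg (Real.rpow_nonneg hk0.le _) (Real.sqrt_nonneg p)
  have hc2 : c ^ 2 = (p - R) ^ 3 / p := by
    rw [hc, div_pow, Real.sq_sqrt hp0.le]
    congr 1
    rw [← Real.rpow_natCast ((p - R) ^ ((3:ℝ)/2)) 2, ← Real.rpow_mul hk0.le,
        show ((3:ℝ)/2) * ((2:ℕ):ℝ) = ((3:ℕ):ℝ) by norm_num, Real.rpow_natCast]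
  set a : ℝ := Real.sqrt ((p - x) ^ 2 + y ^ 2) with ha
  set b : ℝ := Real.sqrt ((R - x) ^ 2 + y ^ 2) with hb
  have ha0 : 0 ≤ a := Real.sqrt_nonneg _
  have hb0 : 0 ≤ b := Real.sqrt_nonneg _
  have ha2 : a ^ 2 = (p - x) ^ 2 + y ^ 2 := Real.sq_sqrt (by positivity)
  have hb2 : b ^ 2 = (R - x) ^ 2 + y ^ 2 := Real.sq_sqrt (by positivity)
  clear_value a b c
  have hxR : x ≤ R := by nlinarith [sq_nonneg y]
  have hbB : b ^ 2 ≤ 2 * R * (R - x) := by nlinarith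
  have hcp : (p - R) ^ 3 / p ≤ (p - R) ^ 2 := by
    rw [div_le_iff₀ hp0]; nlinarith [sq_nonneg (p - R)]
  have hA0 : 0 ≤ a ^ 2 - b ^ 2 - c ^ 2 := by
    rw [ha2, hb2, hc2]
    nlinarith [hcp, sq_nonneg (p - R)]
  have hAsq : (2 * b * c) ^ 2 ≤ (a ^ 2 - b ^ 2 - c ^ 2) ^ 2 := by
    have h1 : (2 * b * c) ^ 2 = 4 * b ^ 2 * (p - R) ^ 3 / p := by
      rw [show (2 * b * c) ^ 2 = 4 * b ^ 2 * c ^ 2 from by ring, hc2]; ring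
    have h2 : a ^ 2 - b ^ 2 - c ^ 2
        = (p - R) * (p * (p + R - 2 * x) - (p - R) ^ 2) / p := by
      rw [ha2, hb2, hc2]; field_simp; ring
    rw [h1, h2, div_pow, div_le_div_iff₀ hp0 (by positivity)]
    have hsq : 0 ≤ (p - R) ^ 2 * p *
        (p * (p + R - 2 * x) - (p - R) ^ 2 - 2 * (p - R) * R) ^ 2 := by positivity
    have hbB' := mul_le_mul_of_nonneg_right hbB
      (show (0:ℝ) ≤ 4 * (p - R) ^ 3 * p ^ 2 by positivity)
    have key : ((p - R) * (p * (p + R - 2 * x) - (p - R) ^ 2)) ^ 2 * p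
        = (p - R) ^ 2 * p *
            (p * (p + R - 2 * x) - (p - R) ^ 2 - 2 * (p - R) * R) ^ 2
          + 2 * R * (R - x) * (4 * (p - R) ^ 3 * p ^ 2) := by ring
    rw [key]
    linarith [hsq, hbB']
  have hA : 2 * b * c ≤ a ^ 2 - b ^ 2 - c ^ 2 :=
    (pow_le_pow_iff_left₀ (by positivity) hA0 two_ne_zero).mp hAsq
  have habc : b + c ≤ a := by
    have hsq : (b + c) ^ 2 ≤ a ^ 2 := by
      have hexp : (b + c) ^ 2 = b ^ 2 + 2 * b * c + c ^ 2 := by ring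
      linarith
    exact (pow_le_pow_iff_left₀ (by positivity) ha0 two_ne_zero).mp hsq
  linarith
end

section
/- Let R > 0 and p > R, and set x⋆ = R(p+R)/(2p) and y⋆ = √(R² − x⋆²). Then 0 < x⋆ < R, the point (x⋆, y⋆) lies on the circle x² + y² = R², and d(x⋆, y⋆) = √((p−x⋆)² + y⋆²) − √((R−x⋆)² + y⋆²) equals (p−R)^{3/2}/√p. -/
theorem stmt_2 (R p : ℝ) (hR : 0 < R) (hp : R < p)
    (xs ys : ℝ) (hxs : xs = R * (p + R) / (2 * p))
    (hys : ys = Real.sqrt (R ^ 2 - xs ^ 2)) :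
    0 < xs ∧ xs < R ∧ xs ^ 2 + ys ^ 2 = R ^ 2 ∧
      Real.sqrt ((p - xs) ^ 2 + ys ^ 2) - Real.sqrt ((R - xs) ^ 2 + ys ^ 2) =
        (p - R) ^ ((3 : ℝ) / 2) / Real.sqrt p := by
  have hp0 : (0:ℝ) < p := hR.trans hp
  have hx0 : 0 < xs := by rw [hxs]; positivity
  have hxR : xs < R := by
    rw [hxs]
    rw [div_lt_iff₀ (by positivity)]
    nlinarith
  have h1 : (0:ℝ) ≤ R ^ 2 - xs ^ 2 := by nlinarith
  have hys2 : ys ^ 2 = R ^ 2 - xs ^ 2 := by rw [hys, Real.sq_sqrt h1]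
  have hpR : (0:ℝ) ≤ p - R := by linarith
  refine ⟨hx0, hxR, by linarith, ?_⟩
  have e1 : (p - xs) ^ 2 + ys ^ 2 = p * (p - R) := by
    rw [hys2, hxs]; field_simp; ring
  have e2 : (R - xs) ^ 2 + ys ^ 2 = R ^ 2 * (p - R) / p := by
    rw [hys2, hxs]; field_simp; ring
  rw [e1, e2]
  have hsp : Real.sqrt p ≠ 0 := by positivity
  have h2 : Real.sqrt (p * (p - R)) = Real.sqrt p * Real.sqrt (p - R) :=
    Real.sqrt_mul hp0.le _
  have h3 : Real.sqrt (R ^ 2 * (p - R) / p) = R * Real.sqrt (p - R) / Real.sqrt p := by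
    rw [Real.sqrt_div (by positivity), Real.sqrt_mul (by positivity),
      Real.sqrt_sq hR.le]
  have h4 : (p - R) ^ ((3:ℝ)/2) = (p - R) * Real.sqrt (p - R) := by
    have hh : (p - R) ^ ((3:ℝ)/2) = (((p - R) ^ (3:ℕ) : ℝ)) ^ ((1:ℝ)/2) := by
      rw [← Real.rpow_natCast (p - R) 3, ← Real.rpow_mul hpR]; norm_num
    rw [hh, ← Real.sqrt_eq_rpow,
      show (p-R)^3 = (p-R)^2 * (p-R) by ring, Real.sqrt_mul (by positivity),
      Real.sqrt_sq hpR]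
  rw [h2, h3, h4]
  have hpp : Real.sqrt p * Real.sqrt p = p := Real.mul_self_sqrt hp0.le
  field_simp
  nlinarith [Real.sqrt_nonneg (p - R), Real.sqrt_nonneg p]
end

section
/- Let {φ_k}_{k=1}^d be orthonormal with respect to an inner product ⟨·,·⟩_A, where ‖·‖_A² = ‖·‖_Ω² + ‖·‖_Ξ² decomposes as a sum of two positive semidefinite quadratic forms. Suppose M̂ := max_k ‖φ_k‖_Ξ² satisfies d·M̂ < 1. Then for any e in the span of {φ_k}, ‖e‖_Ξ² ≤ (d·M̂/(1 − d·M̂)) · ‖e‖_Ω². -/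
/-- Cauchy–Schwarz for a symmetric positive semidefinite bilinear form. -/
lemma bilin_cauchy_schwarz {V : Type*} [AddCommGroup V] [Module ℝ V]
    (B : LinearMap.BilinForm ℝ V) (hsymm : ∀ u v, B u v = B v u)
    (hpos : ∀ v, 0 ≤ B v v) (u v : V) : (B u v) ^ 2 ≤ B u u * B v v := by
  have h : ∀ t : ℝ, 0 ≤ B v v * (t * t) + (2 * B u v) * t + B u u := by
    intro t
    have := hpos (u + t • v)
    simp only [map_add, LinearMap.add_apply, LinearMap.BilinForm.smul_left,
      LinearMap.BilinForm.smul_right, map_smul, smul_eq_mul,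
      LinearMap.smul_apply] at this
    rw [show (B v) u = (B u) v from hsymm v u] at this
    nlinarith [this]
  have := discrim_le_zero h
  rw [discrim] at this
  nlinarith [this]

theorem stmt_14 {V : Type*} [AddCommGroup V] [Module ℝ V] (d : ℕ) (hd : 0 < d)
    (BΩ BΞ : LinearMap.BilinForm ℝ V)
    (hΩsymm : ∀ u v, BΩ u v = BΩ v u)
    (hΞsymm : ∀ u v, BΞ u v = BΞ v u)
    (hΩpos : ∀ v, 0 ≤ BΩ v v) (hΞpos : ∀ v, 0 ≤ BΞ v v)
    (φ : Fin d → V)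
    (horthA : ∀ i j, BΩ (φ i) (φ j) + BΞ (φ i) (φ j) = if i = j then 1 else 0)
    (Mhat : ℝ) (hM : ∀ k, BΞ (φ k) (φ k) ≤ Mhat) (hdM : (d : ℝ) * Mhat < 1) :
    ∀ c : Fin d → ℝ,
      BΞ (∑ k, c k • φ k) (∑ k, c k • φ k) ≤
        ((d : ℝ) * Mhat / (1 - (d : ℝ) * Mhat)) *
          BΩ (∑ k, c k • φ k) (∑ k, c k • φ k) := by
  intro c
  set e := ∑ k, c k • φ k with he
  have expand : ∀ B : LinearMap.BilinForm ℝ V,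
      B e e = ∑ i, ∑ j, c i * c j * B (φ i) (φ j) := by
    intro B
    rw [he]
    simp only [map_sum, LinearMap.sum_apply, LinearMap.BilinForm.smul_left,
      LinearMap.BilinForm.smul_right, map_smul, smul_eq_mul, LinearMap.smul_apply,
      Finset.mul_sum, Finset.sum_apply]
    rw [Finset.sum_comm]
    exact Finset.sum_congr rfl fun i _ => Finset.sum_congr rfl fun j _ => by ring
  have hsum : BΩ e e + BΞ e e = ∑ i, (c i) ^ 2 := by
    rw [expand BΩ, expand BΞ, ← Finset.sum_add_distrib]
    simp_rw [← Finset.sum_add_distrib, ← mul_add, horthA, mul_ite, mul_one, mul_zero]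
    simp [sq]
  set a : Fin d → ℝ := fun i => |c i| * Real.sqrt (BΞ (φ i) (φ i)) with ha
  have step1 : BΞ e e ≤ (∑ i, a i) ^ 2 := by
    rw [expand BΞ, sq, Finset.sum_mul_sum]
    refine Finset.sum_le_sum fun i _ => Finset.sum_le_sum fun j _ => ?_
    have hcs : |BΞ (φ i) (φ j)| ≤ Real.sqrt (BΞ (φ i) (φ i)) * Real.sqrt (BΞ (φ j) (φ j)) := by
      rw [← Real.sqrt_mul (hΞpos _)]
      exact Real.abs_le_sqrt (bilin_cauchy_schwarz BΞ hΞsymm hΞpos (φ i) (φ j))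
    calc c i * c j * BΞ (φ i) (φ j) ≤ |c i * c j * BΞ (φ i) (φ j)| := le_abs_self _
      _ = |c i| * |c j| * |BΞ (φ i) (φ j)| := by rw [abs_mul, abs_mul]
      _ ≤ |c i| * |c j| * (Real.sqrt (BΞ (φ i) (φ i)) * Real.sqrt (BΞ (φ j) (φ j))) := by
          exact mul_le_mul_of_nonneg_left hcs (mul_nonneg (abs_nonneg _) (abs_nonneg _))
      _ = a i * a j := by rw [ha]; ring
  have step2 : (∑ i, a i) ^ 2 ≤ (∑ i, (c i) ^ 2) * (∑ i, BΞ (φ i) (φ i)) := by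
    have := Finset.sum_mul_sq_le_sq_mul_sq Finset.univ (fun i => |c i|)
      (fun i => Real.sqrt (BΞ (φ i) (φ i)))
    simpa [ha, sq_abs, Real.sq_sqrt (hΞpos _)] using this
  have step3 : (∑ i, BΞ (φ i) (φ i)) ≤ (d : ℝ) * Mhat := by
    calc (∑ i : Fin d, BΞ (φ i) (φ i)) ≤ ∑ _i : Fin d, Mhat :=
          Finset.sum_le_sum fun i _ => hM i
      _ = (d : ℝ) * Mhat := by simp [Finset.sum_const, nsmul_eq_mul]
  have hcsq : 0 ≤ ∑ i, (c i) ^ 2 := Finset.sum_nonneg fun i _ => sq_nonneg _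
  have hdM0 : 0 ≤ (d : ℝ) * Mhat := by
    have i0 : Fin d := ⟨0, hd⟩
    have : (0 : ℝ) ≤ Mhat := le_trans (hΞpos (φ i0)) (hM i0)
    positivity
  have key : BΞ e e ≤ ((d : ℝ) * Mhat) * (BΩ e e + BΞ e e) := by
    rw [hsum]
    calc BΞ e e ≤ (∑ i, a i) ^ 2 := step1
      _ ≤ (∑ i, (c i) ^ 2) * (∑ i, BΞ (φ i) (φ i)) := step2
      _ ≤ (∑ i, (c i) ^ 2) * ((d : ℝ) * Mhat) := mul_le_mul_of_nonneg_left step3 hcsq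
      _ = ((d : ℝ) * Mhat) * (∑ i, (c i) ^ 2) := mul_comm _ _
  have hpos1 : (0 : ℝ) < 1 - (d : ℝ) * Mhat := by linarith
  rw [div_mul_eq_mul_div, le_div_iff₀ hpos1]
  have hW : 0 ≤ BΩ e e := hΩpos e
  nlinarith [key, hW]
end
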